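/- Let $Q$ be a finitely generated abelian group, $P$ a prime ideal of the group ring $\mathbb{Z}Q$ such that the domain $B = \mathbb{Z}Q/P$ has Krull dimension 1. Then every nonzero ideal $I$ of $B$ has finite index, i.e., $B/I$ is a finite ring. -/

import Mathlib

/-!
Residue fields of a finitely generated `ℤ`-algebra are finite (Nullstellensatz over the Jacobson
ring `ℤ`). In a domain of dimension one, the minimal primes over a nonzero ideal `I` are maximal,
so the product `J` of these finitely many primes has finite index, and by Noetherianity some
power of `J` lies in `I`; the quotients by powers of `J` are finite as well.
-/

instance Int.isJacobsonRing : IsJacobsonRing ℤ := by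
  refine isJacobsonRing_iff_prime_eq.mpr fun P hP => ?_
  rcases eq_or_ne P ⊥ with rfl | hP0
  · refine le_antisymm (fun x hx => ?_) Ideal.le_jacobson
    have hunit : IsUnit (x * x + 1) := Ideal.mem_jacobson_bot.mp hx x
    rw [Int.isUnit_iff] at hunit
    rw [Ideal.mem_bot]
    rcases hunit with h | h <;> nlinarith
  · have : P.IsMaximal := hP.isMaximal hP0
    exact P.jacobson_eq_self_of_isMaximal

theorem Int.finite_of_field_of_finiteType (K : Type*) [Field K] [Algebra ℤ K]
    [Algebra.FiniteType ℤ K] : Finite K := by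
  obtain rfl := Subsingleton.elim ‹Algebra ℤ K› (Ring.toIntAlgebra K)
  have : Module.Finite ℤ K := finite_of_finite_type_of_isJacobsonRing ℤ K
  -- otherwise `K` would be integral over the subring `ℤ`, forcing `ℤ` to be a field
  have hchar : ¬ Function.Injective (algebraMap ℤ K) := fun hinj =>
    have : Algebra.IsIntegral ℤ K := Algebra.IsIntegral.of_finite ℤ K
    Int.not_isField ((Algebra.IsIntegral.isField_iff_isField hinj).mpr (Field.toIsField K))
  obtain ⟨n, hn, hn0⟩ : ∃ n : ℤ, algebraMap ℤ K n = 0 ∧ n ≠ 0 := by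
    simpa only [injective_iff_map_eq_zero, not_forall, exists_prop] using hchar
  refine Module.finite_of_fg_torsion K fun x => ⟨⟨n, mem_nonZeroDivisors_of_ne_zero hn0⟩, ?_⟩
  change n • x = 0
  rw [zsmul_eq_mul, ← eq_intCast (algebraMap ℤ K), hn, zero_mul]

theorem Ideal.finite_quotient_of_isMaximal_of_finiteType {B : Type*} [CommRing B] [Algebra ℤ B]
    [Algebra.FiniteType ℤ B] (m : Ideal B) [m.IsMaximal] : Finite (B ⧸ m) :=
  letI := Ideal.Quotient.field m
  have : Algebra.FiniteType ℤ (B ⧸ m) :=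
    .of_surjective (Ideal.Quotient.mkₐ ℤ m) Ideal.Quotient.mk_surjective
  Int.finite_of_field_of_finiteType (B ⧸ m)

theorem Ideal.finite_quotient_of_forall_minimalPrimes {R : Type*} [CommRing R]
    [IsNoetherianRing R] (I : Ideal R) (h : ∀ p ∈ I.minimalPrimes, Finite (R ⧸ p)) :
    Finite (R ⧸ I) := by
  set s := (I.finite_minimalPrimes_of_isNoetherianRing R).toFinset
  have hprod : Finite (R ⧸ ∏ p ∈ s, p) :=
    Ideal.finite_quotient_prod id s (fun p _ => IsNoetherian.noetherian p)
      (fun p hp => h p (by simpa [s] using hp))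
  have hle : ∏ p ∈ s, p ≤ I.radical := by
    rw [← Ideal.sInf_minimalPrimes, le_sInf_iff]
    exact fun p hp => Ideal.prod_le_inf.trans (Finset.inf_le (by simpa [s] using hp))
  obtain ⟨n, hn⟩ := Ideal.exists_pow_le_of_le_radical_of_fg hle (IsNoetherian.noetherian _)
  have := Ideal.finite_quotient_pow (IsNoetherian.noetherian (∏ p ∈ s, p)) n
  exact .of_surjective (Ideal.Quotient.factor hn) (Ideal.Quotient.factor_surjective hn)

theorem Ideal.finite_quotient_of_ne_bot_of_finiteType {B : Type*} [CommRing B] [IsDomain B]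
    [Ring.KrullDimLE 1 B] [Algebra ℤ B] [Algebra.FiniteType ℤ B] (I : Ideal B) (hI : I ≠ ⊥) :
    Finite (B ⧸ I) := by
  have : IsNoetherianRing B := Algebra.FiniteType.isNoetherianRing ℤ B
  refine I.finite_quotient_of_forall_minimalPrimes fun p hp => ?_
  have : p.IsPrime := hp.1.1
  have : p.IsMaximal := p.isMaximal_of_isPrime_of_ne_bot
    fun hp0 => hI (le_bot_iff.mp (hp0 ▸ hp.1.2))
  exact p.finite_quotient_of_isMaximal_of_finiteType

/-- Let `Q` be a finitely generated abelian group and `P` a prime ideal of `ℤQ` such that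
the domain `B = ℤQ/P` has Krull dimension 1. Then every nonzero ideal of `B` has finite
index. -/
theorem stmt6 (Q : Type*) [CommGroup Q] [Group.FG Q]
    (P : Ideal (MonoidAlgebra ℤ Q)) [P.IsPrime]
    (hdim : ringKrullDim (MonoidAlgebra ℤ Q ⧸ P) = 1)
    (I : Ideal (MonoidAlgebra ℤ Q ⧸ P)) (hI : I ≠ ⊥) :
    Finite ((MonoidAlgebra ℤ Q ⧸ P) ⧸ I) := by
  have : Monoid.FG Q := Group.fg_iff_monoid_fg.mp ‹_›
  have : Algebra.FiniteType ℤ (MonoidAlgebra ℤ Q ⧸ P) :=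
    .of_surjective (Ideal.Quotient.mkₐ ℤ P) Ideal.Quotient.mk_surjective
  have : Ring.KrullDimLE 1 (MonoidAlgebra ℤ Q ⧸ P) := Ring.krullDimLE_iff.mpr hdim.le
  exact I.finite_quotient_of_ne_bot_of_finiteType hI
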